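/- Define the optimal-action-value distortion between MDP models by d_{Q*}(M,M̂) = max_{h∈[H]} (max_{(s,a)∈S×A} |Q*_{M,h}(s,a) − Q*_{M̂,h}(s,a)|)². Let (Ω,ℱ,P) be a probability space carrying random MDP models M* and M̃ and a random nonstationary policy π̂ such that, P-almost surely, π̂(ω) is an optimal policy for M̃(ω). If E[d_{Q*}(M*, M̃)] ≤ D for some D ≥ 0, then E[V*_{M*,1} − V^{π̂}_{M*,1}] ≤ 2H√D. -/

import Mathlib

open Finset

/-- An MDP model on state space `S` and action space `A`: a reward table
`R : S → A → ℝ` together with a transition table `T : S → A → S → ℝ`. -/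
abbrev MDPModel (S A : Type*) := (S → A → ℝ) × (S → A → S → ℝ)

/-- `f` is a probability mass function on the finite type `α`. -/
def IsPMF {α : Type*} [Fintype α] (f : α → ℝ) : Prop := (∀ a, 0 ≤ f a) ∧ ∑ a, f a = 1

variable {S A : Type*}

section Defs

variable [Fintype S] [Fintype A]

/-- Validity of an MDP model: rewards lie in `[0,1]` and each transition row is a PMF on `S`. -/
def IsValidModel (M : MDPModel S A) : Prop :=
  (∀ s a, M.1 s a ∈ Set.Icc (0 : ℝ) 1) ∧ ∀ s a, IsPMF (fun s' => M.2 s a s')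

/-- A stationary stochastic policy: every row is a PMF on actions. -/
def IsPolicy (σ : S → A → ℝ) : Prop := ∀ s, IsPMF (σ s)

/-- The Bellman operator of model `M` under stationary policy `σ`. -/
def bellman (M : MDPModel S A) (σ : S → A → ℝ) (V : S → ℝ) (s : S) : ℝ :=
  ∑ a, σ s a * (M.1 s a + ∑ s', M.2 s a s' * V s')

/-- Value function with `n` steps to go (auxiliary to `val`); a nonstationary policy is
encoded as `π : ℕ → S → A → ℝ`, with only the components `π 1, …, π H` being relevant. -/
def valAux (M : MDPModel S A) (π : ℕ → S → A → ℝ) (H : ℕ) : ℕ → S → ℝ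
  | 0 => fun _ => 0
  | n + 1 => bellman M (π (H - n)) (valAux M π H n)

/-- `V^π_{M,h}` for horizon `H`, defined by the backward recursion
`V^π_{M,H+1} = 0`, `V^π_{M,h} = B^{π_h}_M V^π_{M,h+1}` (meaningful for `1 ≤ h ≤ H+1`). -/
def val (M : MDPModel S A) (π : ℕ → S → A → ℝ) (H h : ℕ) : S → ℝ :=
  valAux M π H (H + 1 - h)

/-- `Q^π_{M,h}(s,a) = R_M(s,a) + Σ_{s'} T_M(s,a)(s') · V^π_{M,h+1}(s')`. -/
def qval (M : MDPModel S A) (π : ℕ → S → A → ℝ) (H h : ℕ) (s : S) (a : A) : ℝ :=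
  M.1 s a + ∑ s', M.2 s a s' * val M π H (h + 1) s'

/-- The β-averaged value of `π` at step 1: `V^π_{M,1} = Σ_s β(s) · V^π_{M,1}(s)`. -/
def valBar (M : MDPModel S A) (π : ℕ → S → A → ℝ) (H : ℕ) (β : S → ℝ) : ℝ :=
  ∑ s, β s * val M π H 1 s

end Defs

section OptDefs

variable [Fintype S] [Fintype A] [Nonempty A]

/-- Optimal value with `n` steps to go (auxiliary to `optVal`). -/
noncomputable def optValAux (M : MDPModel S A) : ℕ → S → ℝ
  | 0 => fun _ => 0
  | n + 1 => fun s =>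
      univ.sup' univ_nonempty fun a => M.1 s a + ∑ s', M.2 s a s' * optValAux M n s'

/-- `V*_{M,h}` for horizon `H`: `V*_{M,H+1} = 0`, `V*_{M,h}(s) = max_a Q*_{M,h}(s,a)`. -/
noncomputable def optVal (M : MDPModel S A) (H h : ℕ) : S → ℝ := optValAux M (H + 1 - h)

/-- `Q*_{M,h}(s,a) = R_M(s,a) + Σ_{s'} T_M(s,a)(s') · V*_{M,h+1}(s')`. -/
noncomputable def optQ (M : MDPModel S A) (H h : ℕ) (s : S) (a : A) : ℝ :=
  M.1 s a + ∑ s', M.2 s a s' * optVal M H (h + 1) s'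

/-- The β-averaged optimal value at step 1: `V*_{M,1} = Σ_s β(s) · V*_{M,1}(s)`. -/
noncomputable def optValBar (M : MDPModel S A) (H : ℕ) (β : S → ℝ) : ℝ :=
  ∑ s, β s * optVal M H 1 s

/-- `π` is an optimal nonstationary policy for `M`. -/
noncomputable def IsOptimalPolicy (M : MDPModel S A) (H : ℕ) (π : ℕ → S → A → ℝ) : Prop :=
  ∀ h, 1 ≤ h → h ≤ H + 1 → val M π H h = optVal M H h

end OptDefs

/-- The optimal-action-value distortion
`d_{Q*}(M,Mh) = max_{h∈[H]} (max_{(s,a)} |Q*_{M,h}(s,a) − Q*_{Mh,h}(s,a)|)²`. -/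
noncomputable def dQstar [Fintype S] [Fintype A] [Nonempty S] [Nonempty A]
    (H : ℕ) (M Mh : MDPModel S A) : ℝ :=
  if hH : 1 ≤ H then
    (Finset.Icc 1 H).sup' (Finset.nonempty_Icc.mpr hH) fun h =>
      (univ.sup' univ_nonempty fun sa : S × A =>
        |optQ M H h sa.1 sa.2 - optQ Mh H h sa.1 sa.2|) ^ 2
  else 0

/-!
For a policy `π` optimal for `M̃`, the gap `V*_{M,h} - V^π_{M,h}` splits as
`(V*_{M,h} - V*_{M̃,h}) + (V^π_{M̃,h} - V^π_{M,h})`, since `V^π_{M̃,h} = V*_{M̃,h}`.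
With `ε = √d_{Q*}(M, M̃)` bounding every `Q*`-gap, the first term is at most `ε` and the
second at most `ε` plus the gap at step `h + 1` averaged over the transitions of `M`; so the
gap at step `h` is at most `2(H + 1 - h)ε`, and the regret at most `2Hε`. Taking expectations,
Jensen's inequality for the concave square root gives `E[√d] ≤ √(E[d]) ≤ √D`.
-/

open MeasureTheory

namespace IsPMF

variable {α : Type*} [Fintype α] {p f g : α → ℝ} {c : ℝ}

lemma sum_mul_le (hp : IsPMF p) (hf : ∀ a, f a ≤ c) : ∑ a, p a * f a ≤ c :=
  calc ∑ a, p a * f a ≤ ∑ a, p a * c :=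
        sum_le_sum fun a _ => mul_le_mul_of_nonneg_left (hf a) (hp.1 a)
    _ = c := by rw [← sum_mul, hp.2, one_mul]

lemma le_sum_mul (hp : IsPMF p) (hf : ∀ a, c ≤ f a) : c ≤ ∑ a, p a * f a :=
  calc c = ∑ a, p a * c := by rw [← sum_mul, hp.2, one_mul]
    _ ≤ ∑ a, p a * f a := sum_le_sum fun a _ => mul_le_mul_of_nonneg_left (hf a) (hp.1 a)

lemma sum_mul_sub_sum_mul_le (hp : IsPMF p) (hfg : ∀ a, f a - g a ≤ c) :
    ∑ a, p a * f a - ∑ a, p a * g a ≤ c := by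
  simpa only [← sum_sub_distrib, ← mul_sub] using hp.sum_mul_le hfg

end IsPMF

section Recursion

variable [Fintype S] [Fintype A] {M : MDPModel S A} {π : ℕ → S → A → ℝ} {H h : ℕ}

lemma val_horizon_succ : val M π H (H + 1) = 0 := by
  ext s
  simp [_root_.val, valAux]

lemma val_eq_sum_qval (hh : h ≤ H) (s : S) :
    val M π H h s = ∑ a, π h s a * qval M π H h s a := by
  rw [_root_.val, show H + 1 - h = H - h + 1 by omega, valAux, bellman,
    show H - (H - h) = h by omega]
  simp only [qval, _root_.val, show H + 1 - (h + 1) = H - h by omega]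

lemma optVal_horizon_succ [Nonempty A] : optVal M H (H + 1) = 0 := by
  ext s
  simp [optVal, optValAux]

lemma optVal_eq_sup'_optQ [Nonempty A] (hh : h ≤ H) (s : S) :
    optVal M H h s = univ.sup' univ_nonempty (optQ M H h s) := by
  rw [optVal, show H + 1 - h = H - h + 1 by omega, optValAux]
  dsimp only
  congr 1
  funext a
  rw [optQ, optVal, show H + 1 - (h + 1) = H - h by omega]

end Recursion

section Bounds

variable [Fintype S] {M Mh : MDPModel S A}

lemma IsValidModel.reward_add_expect_mem_Icc (hM : IsValidModel M) {V : S → ℝ} {c : ℝ}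
    (hV : ∀ s, V s ∈ Set.Icc 0 c) (s : S) (a : A) :
    M.1 s a + ∑ s', M.2 s a s' * V s' ∈ Set.Icc 0 (1 + c) :=
  ⟨add_nonneg (hM.1 s a).1 ((hM.2 s a).le_sum_mul fun s' => (hV s').1),
    add_le_add (hM.1 s a).2 ((hM.2 s a).sum_mul_le fun s' => (hV s').2)⟩

variable [Fintype A] [Nonempty A]

lemma optValAux_mem_Icc (hM : IsValidModel M) (n : ℕ) (s : S) :
    optValAux M n s ∈ Set.Icc (0 : ℝ) n := by
  induction n generalizing s with
  | zero => simp [optValAux]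
  | succ n ih =>
    have hq := hM.reward_add_expect_mem_Icc ih s
    rw [optValAux, Nat.cast_succ, add_comm]
    refine ⟨le_sup'_of_le _ (mem_univ (Classical.arbitrary A)) (hq _).1, ?_⟩
    exact sup'_le _ _ fun a _ => (hq a).2

lemma optQ_mem_Icc (hM : IsValidModel M) (H h : ℕ) (s : S) (a : A) :
    optQ M H h s a ∈ Set.Icc (0 : ℝ) (H + 1) := by
  have hq := hM.reward_add_expect_mem_Icc (optValAux_mem_Icc hM (H + 1 - (h + 1))) s a
  have hn : ((H + 1 - (h + 1) : ℕ) : ℝ) ≤ H := Nat.cast_le.mpr (by omega)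
  exact ⟨hq.1, hq.2.trans (by linarith)⟩

variable [Nonempty S]

lemma dQstar_nonneg (H : ℕ) (M Mh : MDPModel S A) : 0 ≤ dQstar H M Mh := by
  rw [dQstar]
  split_ifs with hH
  · exact le_sup'_of_le _ (mem_Icc.mpr ⟨le_rfl, hH⟩) (sq_nonneg _)
  · exact le_rfl

lemma dQstar_le (hM : IsValidModel M) (hMh : IsValidModel Mh) (H : ℕ) :
    dQstar H M Mh ≤ (H + 1) ^ 2 := by
  rw [dQstar]
  split_ifs
  · refine sup'_le _ _ fun h _ => pow_le_pow_left₀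
      (le_sup'_of_le _ (mem_univ (Classical.arbitrary _)) (abs_nonneg _))
      (sup'_le _ _ fun sa _ => ?_) 2
    have hQ := optQ_mem_Icc hM H h sa.1 sa.2
    have hQh := optQ_mem_Icc hMh H h sa.1 sa.2
    exact abs_sub_le_iff.mpr ⟨by linarith [hQ.2, hQh.1], by linarith [hQ.1, hQh.2]⟩
  · positivity

lemma sq_optQ_sub_le_dQstar {H h : ℕ} (h1 : 1 ≤ h) (hH : h ≤ H) (s : S) (a : A) :
    (optQ M H h s a - optQ Mh H h s a) ^ 2 ≤ dQstar H M Mh := by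
  rw [dQstar, dif_pos (h1.trans hH)]
  refine le_trans ?_ (le_sup' _ (mem_Icc.mpr ⟨h1, hH⟩))
  rw [← sq_abs]
  gcongr
  exact le_sup' (fun sa : S × A => |optQ M H h sa.1 sa.2 - optQ Mh H h sa.1 sa.2|) (mem_univ (s, a))

end Bounds

section Simulation

variable [Fintype S] [Fintype A] [Nonempty A] {M Mh : MDPModel S A} {π : ℕ → S → A → ℝ} {H : ℕ}

theorem optVal_sub_val_le_of_isOptimalPolicy (hM : IsValidModel M) (hπ : ∀ h, IsPolicy (π h))
    (hopt : IsOptimalPolicy Mh H π) {ε : ℝ}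
    (hε : ∀ h, 1 ≤ h → h ≤ H → ∀ s a, |optQ M H h s a - optQ Mh H h s a| ≤ ε)
    {h : ℕ} (h1 : 1 ≤ h) (hh : h ≤ H + 1) (s : S) :
    optVal M H h s - val M π H h s ≤ 2 * ((H : ℝ) + 1 - h) * ε := by
  induction hh using Nat.decreasingInduction generalizing s with
  | self => simp [val_horizon_succ, optVal_horizon_succ]
  | of_succ k hk ih =>
    have hkH : k ≤ H := Nat.lt_succ_iff.mp hk
    have hεk := fun a => abs_le.mp (hε k h1 hkH s a)
    have hV : optVal M H k s - optVal Mh H k s ≤ ε := by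
      rw [optVal_eq_sup'_optQ hkH, optVal_eq_sup'_optQ hkH, sub_le_iff_le_add]
      exact sup'_le _ _ fun a _ => by
        linarith [(hεk a).2, le_sup' (optQ Mh H k s) (mem_univ a)]
    have hQ : ∀ a, qval Mh π H k s a - qval M π H k s a ≤ ε + 2 * (H - k) * ε := by
      intro a
      have hgap : optQ M H k s a - qval M π H k s a ≤ 2 * (H - k) * ε := by
        have hT := (hM.2 s a).sum_mul_sub_sum_mul_le fun s' => ih (by omega) s'
        rw [optQ, qval, add_sub_add_left_eq_sub]
        push_cast at hT
        linarith
      have hqMh : qval Mh π H k s a = optQ Mh H k s a := by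
        rw [qval, optQ, hopt (k + 1) (by omega) (by omega)]
      linarith [(hεk a).1]
    have hπV : val Mh π H k s - val M π H k s ≤ ε + 2 * (H - k) * ε := by
      rw [val_eq_sum_qval hkH, val_eq_sum_qval hkH]
      exact (hπ k s).sum_mul_sub_sum_mul_le hQ
    rw [hopt k h1 (by omega)] at hπV
    linarith

end Simulation

section Regret

variable [Fintype S] [Fintype A] [Nonempty S] [Nonempty A] {M Mh : MDPModel S A}
  {π : ℕ → S → A → ℝ} {H : ℕ} {β : S → ℝ}

theorem optValBar_sub_valBar_le_sqrt_dQstar (hM : IsValidModel M) (hπ : ∀ h, IsPolicy (π h))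
    (hopt : IsOptimalPolicy Mh H π) (hβ : IsPMF β) :
    optValBar M H β - valBar M π H β ≤ 2 * H * √(dQstar H M Mh) := by
  refine hβ.sum_mul_sub_sum_mul_le fun s => ?_
  have h := optVal_sub_val_le_of_isOptimalPolicy hM hπ hopt
    (fun h h1 hH s a => Real.abs_le_sqrt (sq_optQ_sub_le_dQstar h1 hH s a)) le_rfl (by omega) s
  rwa [Nat.cast_one, add_sub_cancel_right] at h

end Regret

lemma Finset.measurable_sup'' {ι δ α : Type*} [MeasurableSpace δ] [MeasurableSpace α]
    [SemilatticeSup α] [MeasurableSup₂ α] {s : Finset ι} (hs : s.Nonempty) {f : ι → δ → α}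
    (hf : ∀ i ∈ s, Measurable (f i)) : Measurable fun x => s.sup' hs (f · x) := by
  rw [← funext (Finset.sup'_apply hs f)]
  exact Finset.measurable_sup' hs hf

section Measurability

variable [Fintype S] [Fintype A] [Nonempty A] {Ω : Type*} [MeasurableSpace Ω]
  {M Mh : Ω → MDPModel S A}

lemma measurable_optValAux (hM : Measurable M) (n : ℕ) (s : S) :
    Measurable fun ω => optValAux (M ω) n s := by
  induction n generalizing s with
  | zero => exact measurable_const
  | succ n ih =>
    simp only [optValAux]
    exact Finset.measurable_sup'' _ fun a _ => by fun_prop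

lemma measurable_optQ (hM : Measurable M) (H h : ℕ) (s : S) (a : A) :
    Measurable fun ω => optQ (M ω) H h s a := by
  have := measurable_optValAux hM
  simp only [optQ, optVal]
  fun_prop

lemma measurable_dQstar [Nonempty S] (hM : Measurable M) (hMh : Measurable Mh) (H : ℕ) :
    Measurable fun ω => dQstar H (M ω) (Mh ω) := by
  unfold dQstar
  split_ifs
  · refine Finset.measurable_sup'' _ fun h _ =>
      .pow_const (Finset.measurable_sup'' _ fun sa _ => ?_) 2
    exact ((measurable_optQ hM H h sa.1 sa.2).sub (measurable_optQ hMh H h sa.1 sa.2)).abs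
  · exact measurable_const

end Measurability

lemma integral_sqrt_le_sqrt_integral {Ω : Type*} [MeasurableSpace Ω] {P : Measure Ω}
    [IsProbabilityMeasure P] {f : Ω → ℝ} (hf0 : ∀ᵐ ω ∂P, 0 ≤ f ω) (hf : Integrable f P)
    (hsf : Integrable (fun ω => √(f ω)) P) : ∫ ω, √(f ω) ∂P ≤ √(∫ ω, f ω ∂P) :=
  Real.strictConcaveOn_sqrt.concaveOn.le_map_integral Real.continuous_sqrt.continuousOn isClosed_Ici
    hf0 hf hsf

theorem expected_regret_le_sqrt_dQstar_general
    [Fintype S] [Fintype A] [Nonempty S] [Nonempty A]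
    (H : ℕ) (β : S → ℝ) (hβ : IsPMF β)
    {Ω : Type*} [MeasurableSpace Ω] (P : Measure Ω) [IsProbabilityMeasure P]
    (Mstar Mt : Ω → MDPModel S A) (hMstar : Measurable Mstar) (hMt : Measurable Mt)
    (hMstarValid : ∀ ω, IsValidModel (Mstar ω)) (hMtValid : ∀ ω, IsValidModel (Mt ω))
    (πh : Ω → ℕ → S → A → ℝ)
    (hπpol : ∀ ω, ∀ h, IsPolicy (πh ω h))
    (hπopt : ∀ᵐ ω ∂P, IsOptimalPolicy (Mt ω) H (πh ω))
    (D : ℝ)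
    (hdist : ∫ ω, dQstar H (Mstar ω) (Mt ω) ∂P ≤ D) :
    ∫ ω, (optValBar (Mstar ω) H β - valBar (Mstar ω) (πh ω) H β) ∂P ≤
      2 * H * Real.sqrt D := by
  set d := fun ω => dQstar H (Mstar ω) (Mt ω)
  have hd_meas : Measurable d := measurable_dQstar hMstar hMt H
  have hd_nonneg ω : 0 ≤ d ω := dQstar_nonneg H _ _
  have hd_le ω : d ω ≤ (H + 1) ^ 2 := dQstar_le (hMstarValid ω) (hMtValid ω) H
  have hd_int : Integrable d P := .of_bound hd_meas.aestronglyMeasurable _ <|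
    ae_of_all _ fun ω => (Real.norm_of_nonneg (hd_nonneg ω)).trans_le (hd_le ω)
  have hsqrt_int : Integrable (fun ω => √(d ω)) P :=
    .of_bound hd_meas.sqrt.aestronglyMeasurable (H + 1) <| ae_of_all _ fun ω => by
      rw [Real.norm_of_nonneg (Real.sqrt_nonneg _)]
      exact (Real.sqrt_le_left (by positivity)).mpr (hd_le ω)
  have hregret_le : ∀ᵐ ω ∂P,
      optValBar (Mstar ω) H β - valBar (Mstar ω) (πh ω) H β ≤ 2 * H * √(d ω) :=
    hπopt.mono fun ω hω => optValBar_sub_valBar_le_sqrt_dQstar (hMstarValid ω) (hπpol ω) hω hβ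
  by_cases hregret : Integrable (fun ω => optValBar (Mstar ω) H β - valBar (Mstar ω) (πh ω) H β) P
  · calc _ ≤ ∫ ω, 2 * H * √(d ω) ∂P :=
          integral_mono_ae hregret (hsqrt_int.const_mul _) hregret_le
      _ = 2 * H * ∫ ω, √(d ω) ∂P := integral_const_mul _ _
      _ ≤ 2 * H * √(∫ ω, d ω ∂P) := by
          gcongr
          exact integral_sqrt_le_sqrt_integral (ae_of_all _ hd_nonneg) hd_int hsqrt_int
      _ ≤ 2 * H * √D := by gcongr
  · -- the Bochner integral of a non-integrable function is `0`
    rw [integral_undef hregret]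
    positivity

/-- Let `M⋆`, `Mt` be random MDP models and `π̂` a random
nonstationary policy that is almost surely optimal for `Mt`.  If
`E[d_{Q*}(M⋆, Mt)] ≤ D` then `E[V*_{M⋆,1} − V^{π̂}_{M⋆,1}] ≤ 2H√D`. -/
theorem expected_regret_le_sqrt_dQstar
    [Fintype S] [Fintype A] [Nonempty S] [Nonempty A]
    (H : ℕ) (hH : 1 ≤ H) (β : S → ℝ) (hβ : IsPMF β)
    {Ω : Type*} [MeasurableSpace Ω] (P : Measure Ω) [IsProbabilityMeasure P]
    (Mstar Mt : Ω → MDPModel S A) (hMstar : Measurable Mstar) (hMt : Measurable Mt)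
    (hMstarValid : ∀ ω, IsValidModel (Mstar ω)) (hMtValid : ∀ ω, IsValidModel (Mt ω))
    (πh : Ω → ℕ → S → A → ℝ) (hπmeas : Measurable πh)
    (hπpol : ∀ ω, ∀ h, IsPolicy (πh ω h))
    (hπopt : ∀ᵐ ω ∂P, IsOptimalPolicy (Mt ω) H (πh ω))
    (D : ℝ) (hD : 0 ≤ D)
    (hdist : ∫ ω, dQstar H (Mstar ω) (Mt ω) ∂P ≤ D) :
    ∫ ω, (optValBar (Mstar ω) H β - valBar (Mstar ω) (πh ω) H β) ∂P ≤
      2 * H * Real.sqrt D :=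
  expected_regret_le_sqrt_dQstar_general H β hβ P Mstar Mt hMstar hMt hMstarValid hMtValid πh hπpol
    hπopt D hdist
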